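/- With the same setup, U (B ψ ⊗ |+⟩) = Z_anc U (ψ ⊗ |+⟩): applying B before the swap circuit equals applying Pauli Z on the ancilla after. -/

import Mathlib

open TensorProduct

/-- Projector `|0⟩⟨0|` on the qubit `Fin 2 → ℂ`. -/
noncomputable def P0 : (Fin 2 → ℂ) →ₗ[ℂ] (Fin 2 → ℂ) :=
  Matrix.toLin' !![(1 : ℂ), 0; 0, 0]

/-- Projector `|1⟩⟨1|` on the qubit `Fin 2 → ℂ`. -/
noncomputable def P1 : (Fin 2 → ℂ) →ₗ[ℂ] (Fin 2 → ℂ) :=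
  Matrix.toLin' !![(0 : ℂ), 0; 0, 1]

/-- Hadamard gate on the qubit. -/
noncomputable def Hgate : (Fin 2 → ℂ) →ₗ[ℂ] (Fin 2 → ℂ) :=
  Matrix.toLin' ((Real.sqrt 2 : ℂ)⁻¹ • !![(1 : ℂ), 1; 1, -1])

/-- Pauli X on the qubit. -/
noncomputable def Xgate : (Fin 2 → ℂ) →ₗ[ℂ] (Fin 2 → ℂ) :=
  Matrix.toLin' !![(0 : ℂ), 1; 1, 0]

/-- Pauli Z on the qubit. -/
noncomputable def Zgate : (Fin 2 → ℂ) →ₗ[ℂ] (Fin 2 → ℂ) :=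
  Matrix.toLin' !![(1 : ℂ), 0; 0, -1]

/-- The `|+⟩` state. -/
noncomputable def plusState : Fin 2 → ℂ := fun _ => (Real.sqrt 2 : ℂ)⁻¹

variable {H : Type*} [NormedAddCommGroup H] [InnerProductSpace ℂ H]

/-- Controlled-`M` gate on `H ⊗ ℂ²` with control on the ancilla (`ℂ²`) factor:
`|0⟩⟨0| ⊗ I + |1⟩⟨1| ⊗ M` (ancilla written second). -/
noncomputable def ctrl (M : H →ₗ[ℂ] H) : (H ⊗[ℂ] (Fin 2 → ℂ)) →ₗ[ℂ] (H ⊗[ℂ] (Fin 2 → ℂ)) :=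
  TensorProduct.map LinearMap.id P0 + TensorProduct.map M P1

/-- A gate acting only on the ancilla qubit. -/
noncomputable def onAnc (M : (Fin 2 → ℂ) →ₗ[ℂ] (Fin 2 → ℂ)) :
    (H ⊗[ℂ] (Fin 2 → ℂ)) →ₗ[ℂ] (H ⊗[ℂ] (Fin 2 → ℂ)) :=
  TensorProduct.map LinearMap.id M

/-- The swap circuit `(ctrl-A)(H₂ ctrl-B H₂)(ctrl-A)`: first ctrl-A, then Hadamard
on the ancilla, then ctrl-B, then Hadamard on the ancilla, then ctrl-A. -/
noncomputable def swapCircuit (A B : H →ₗ[ℂ] H) :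
    (H ⊗[ℂ] (Fin 2 → ℂ)) →ₗ[ℂ] (H ⊗[ℂ] (Fin 2 → ℂ)) :=
  ctrl A ∘ₗ onAnc Hgate ∘ₗ ctrl B ∘ₗ onAnc Hgate ∘ₗ ctrl A

/-!
On `φ ⊗ |+⟩` the circuit outputs `2^{-3/2} ((u + B v) ⊗ |0⟩ + A (u - B v) ⊗ |1⟩)`, where
`u = φ + Aφ` and `v = φ - Aφ` are the two branches after the first Hadamard. For `φ = Bψ`,
the anticommutation `ABψ = -BAψ` and `B² = 1` give `u = B (ψ - Aψ)` and `B v = ψ + Aψ`: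
the roles of `u` and `B v` are exchanged, so the `|0⟩` branch is unchanged while the `|1⟩`
branch changes sign.
-/

abbrev ket0 : Fin 2 → ℂ := Pi.single 0 1

abbrev ket1 : Fin 2 → ℂ := Pi.single 1 1

lemma P0_ket0 : P0 ket0 = ket0 := by
  ext i; fin_cases i <;> simp [P0]

lemma P0_ket1 : P0 ket1 = 0 := by
  ext i; fin_cases i <;> simp [P0]

lemma P1_ket0 : P1 ket0 = 0 := by
  ext i; fin_cases i <;> simp [P1]

lemma P1_ket1 : P1 ket1 = ket1 := by
  ext i; fin_cases i <;> simp [P1]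

lemma Hgate_ket0 : Hgate ket0 = (Real.sqrt 2 : ℂ)⁻¹ • (ket0 + ket1) := by
  ext i; fin_cases i <;> simp [Hgate]

lemma Hgate_ket1 : Hgate ket1 = (Real.sqrt 2 : ℂ)⁻¹ • (ket0 - ket1) := by
  ext i; fin_cases i <;> simp [Hgate]

lemma Zgate_ket0 : Zgate ket0 = ket0 := by
  ext i; fin_cases i <;> simp [Zgate]

lemma Zgate_ket1 : Zgate ket1 = -ket1 := by
  ext i; fin_cases i <;> simp [Zgate]

lemma plusState_eq : plusState = (Real.sqrt 2 : ℂ)⁻¹ • (ket0 + ket1) := by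
  ext i; fin_cases i <;> simp [plusState]

lemma onAnc_tmul (M : (Fin 2 → ℂ) →ₗ[ℂ] (Fin 2 → ℂ)) (x : H) (v : Fin 2 → ℂ) :
    onAnc M (x ⊗ₜ[ℂ] v) = x ⊗ₜ[ℂ] M v :=
  rfl

lemma ctrl_tmul_ket0 (M : H →ₗ[ℂ] H) (x : H) : ctrl M (x ⊗ₜ[ℂ] ket0) = x ⊗ₜ[ℂ] ket0 := by
  simp [ctrl, P0_ket0, P1_ket0]

lemma ctrl_tmul_ket1 (M : H →ₗ[ℂ] H) (x : H) : ctrl M (x ⊗ₜ[ℂ] ket1) = M x ⊗ₜ[ℂ] ket1 := by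
  simp [ctrl, P0_ket1, P1_ket1]

lemma ctrl_split (M : H →ₗ[ℂ] H) (x y : H) :
    ctrl M (x ⊗ₜ[ℂ] ket0 + y ⊗ₜ[ℂ] ket1) = x ⊗ₜ[ℂ] ket0 + M y ⊗ₜ[ℂ] ket1 := by
  rw [map_add, ctrl_tmul_ket0, ctrl_tmul_ket1]

lemma onAnc_Hgate_split (x y : H) :
    onAnc Hgate (x ⊗ₜ[ℂ] ket0 + y ⊗ₜ[ℂ] ket1) =
      (Real.sqrt 2 : ℂ)⁻¹ • ((x + y) ⊗ₜ[ℂ] ket0 + (x - y) ⊗ₜ[ℂ] ket1) := by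
  simp only [map_add, onAnc_tmul, Hgate_ket0, Hgate_ket1, tmul_smul, tmul_add, tmul_sub,
    add_tmul, sub_tmul]
  module

lemma onAnc_Zgate_split (x y : H) :
    onAnc Zgate (x ⊗ₜ[ℂ] ket0 + y ⊗ₜ[ℂ] ket1) = x ⊗ₜ[ℂ] ket0 - y ⊗ₜ[ℂ] ket1 := by
  rw [map_add, onAnc_tmul, onAnc_tmul, Zgate_ket0, Zgate_ket1, tmul_neg, sub_eq_add_neg]

lemma tmul_plusState (x : H) :
    x ⊗ₜ[ℂ] plusState = (Real.sqrt 2 : ℂ)⁻¹ • (x ⊗ₜ[ℂ] ket0 + x ⊗ₜ[ℂ] ket1) := by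
  rw [plusState_eq, tmul_smul, tmul_add]

lemma swapCircuit_tmul_plusState (A B : H →ₗ[ℂ] H) (φ : H) :
    swapCircuit A B (φ ⊗ₜ[ℂ] plusState) =
      (Real.sqrt 2 : ℂ)⁻¹ ^ 3 •
        ((φ + A φ + B (φ - A φ)) ⊗ₜ[ℂ] ket0 + A (φ + A φ - B (φ - A φ)) ⊗ₜ[ℂ] ket1) := by
  simp only [swapCircuit, LinearMap.comp_apply, tmul_plusState, map_smul, ctrl_split,
    onAnc_Hgate_split, smul_smul, ← pow_three]

theorem swapCircuit_B_eq_Zanc_general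
    (A B : H →ₗ[ℂ] H)
    (hB2 : B ∘ₗ B = LinearMap.id)
    (ψ : H) (hAB : A (B ψ) = -(B (A ψ))) :
    swapCircuit A B ((B ψ) ⊗ₜ[ℂ] plusState) =
      onAnc Zgate (swapCircuit A B (ψ ⊗ₜ[ℂ] plusState)) := by
  have hBB (x : H) : B (B x) = x := LinearMap.congr_fun hB2 x
  have h_sum : B ψ + A (B ψ) = B (ψ - A ψ) := by rw [hAB, map_sub, sub_eq_add_neg]
  have h_diff : B (B ψ - A (B ψ)) = ψ + A ψ := by
    rw [hAB, sub_neg_eq_add, ← map_add, hBB]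
  rw [swapCircuit_tmul_plusState, swapCircuit_tmul_plusState, h_sum, h_diff, map_smul,
    onAnc_Zgate_split, add_comm (B _), ← neg_sub (ψ + A ψ), map_neg, neg_tmul, ← sub_eq_add_neg]

/-- Applying `B` before the swap circuit equals applying Pauli Z on the ancilla
after: `U (B ψ ⊗ |+⟩) = Z_anc U (ψ ⊗ |+⟩)`. -/
theorem swapCircuit_B_eq_Zanc
    (A B : H →ₗ[ℂ] H) (hA : A.IsSymmetric) (hB : B.IsSymmetric)
    (hA2 : A ∘ₗ A = LinearMap.id) (hB2 : B ∘ₗ B = LinearMap.id)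
    (ψ : H) (hψ : ‖ψ‖ = 1) (hAB : A (B ψ) = -(B (A ψ))) :
    swapCircuit A B ((B ψ) ⊗ₜ[ℂ] plusState) =
      onAnc Zgate (swapCircuit A B (ψ ⊗ₜ[ℂ] plusState)) :=
  swapCircuit_B_eq_Zanc_general A B hB2 ψ hAB
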